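/- Let D be a G-admissible divisor on H. Then for every vertex v of G, the divisor M_v(D) is G-admissible, and moreover M_v(D) = D + div_ℓ(χ_v; D), where χ_v : V(G) → ℤ is the characteristic function of {v}. -/

import Mathlib

open Finset
open scoped Classical

structure Multigraph (V E : Type) where
  tail : E → V
  head : E → V
  loopless : ∀ e, tail e ≠ head e

namespace Multigraph

variable {V E : Type}

/-- The simple graph of adjacency underlying a multigraph. -/
def adjG (G : Multigraph V E) : SimpleGraph V :=
  SimpleGraph.fromRel (fun u v => ∃ e, G.tail e = u ∧ G.head e = v)

/-- A multigraph is connected if its adjacency graph is. -/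
def Conn (G : Multigraph V E) : Prop := G.adjG.Connected

end Multigraph

variable {V E : Type} [Fintype V] [Fintype E] [DecidableEq V] [DecidableEq E]

/-- The vertex set of the subdivision `H` of `G`: the vertices of `G` together with,
for each edge `e`, the `ℓ e − 1` interior vertices `x_1^e, …, x_{ℓ_e − 1}^e` of the
subdivision of `e` (the pair `⟨e, j⟩` encodes `x_{j+1}^e`, indexed along the reference
orientation of `e`). -/
abbrev VH (V E : Type) (ℓ : E → ℕ) := V ⊕ (Σ e : E, Fin (ℓ e - 1))

/-- The vertex `x_j^e` of `H` (along the reference orientation of `e`),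
for `0 ≤ j ≤ ℓ e`. -/
def xv (G : Multigraph V E) (ℓ : E → ℕ) (e : E) (j : ℕ) : VH V E ℓ :=
  if h : j = 0 then Sum.inl (G.tail e)
  else if h2 : j < ℓ e then Sum.inr ⟨e, ⟨j - 1, by omega⟩⟩
  else Sum.inl (G.head e)

/-- The principal divisor `div(F)` on `H` of a function `F : V(H) → ℤ`; its value at a
vertex `w` is `ord_w(F) = Σ (F(u) − F(w))`, the sum being over the edges of `H` between
`u` and `w`. The edges of `H` are the pairs `{x_j^e, x_{j+1}^e}` for `0 ≤ j < ℓ e`. -/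
def divH (G : Multigraph V E) (ℓ : E → ℕ) (F : VH V E ℓ → ℤ) (w : VH V E ℓ) : ℤ :=
  ∑ e : E, ∑ j ∈ Finset.range (ℓ e),
    ((if xv G ℓ e j = w then F (xv G ℓ e (j + 1)) - F (xv G ℓ e j) else 0) +
     (if xv G ℓ e (j + 1) = w then F (xv G ℓ e j) - F (xv G ℓ e (j + 1)) else 0))

/-- A divisor `D` on `H` is `G`-admissible if, for every edge `e` of `G`, `D` vanishes
at all interior vertices of the subdivision of `e`, except at most one where it
takes the value `1`. -/
def GAdm (G : Multigraph V E) (ℓ : E → ℕ) (D : VH V E ℓ → ℤ) : Prop :=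
  ∀ e : E,
    (∀ j : Fin (ℓ e - 1), D (Sum.inr ⟨e, j⟩) = 0) ∨
    (∃ j : Fin (ℓ e - 1), D (Sum.inr ⟨e, j⟩) = 1 ∧
      ∀ j' : Fin (ℓ e - 1), j' ≠ j → D (Sum.inr ⟨e, j'⟩) = 0)

/-- `F : V(H) → ℤ` is the canonical extension of `f : V(G) → ℤ` with respect to the
divisor `D` on `H`: it extends `f` and `D + div(F)` is `G`-admissible. -/
def IsCanExt (G : Multigraph V E) (ℓ : E → ℕ) (D : VH V E ℓ → ℤ) (f : V → ℤ)
    (F : VH V E ℓ → ℤ) : Prop :=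
  (∀ v : V, F (Sum.inl v) = f v) ∧ GAdm G ℓ (fun w => D w + divH G ℓ F w)

/-- Membership in the cut `C_v(D)` of a `G`-admissible divisor `D` at a vertex `v` of
`G`: it contains `v` itself and, for each oriented edge `e` with tail `v`, the interior
vertices `x_i^e` with `1 ≤ i ≤ j_e(v)`, where `j_e(v)` is the position of the (unique)
interior vertex of `e` where `D` takes the value `1` (and `j_e(v) = 0` if there is none).
(The pair `⟨e, j⟩` encodes the interior vertex at position `j+1` along the reference
orientation of `e`.) -/
def inCutAt (G : Multigraph V E) (ℓ : E → ℕ) (D : VH V E ℓ → ℤ) (v : V) :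
    VH V E ℓ → Prop := fun w =>
  match w with
  | Sum.inl u => u = v
  | Sum.inr p =>
      (G.tail p.1 = v ∧ ∃ j : Fin (ℓ p.1 - 1), D (Sum.inr ⟨p.1, j⟩) = 1 ∧ p.2 ≤ j) ∨
      (G.head p.1 = v ∧ ∃ j : Fin (ℓ p.1 - 1), D (Sum.inr ⟨p.1, j⟩) = 1 ∧ j ≤ p.2)

/-- The `G`-admissible chip-firing move of `D` at `v`:
`M_v(D) = D + div(χ_{C_v(D)})`. -/
noncomputable def Mv (G : Multigraph V E) (ℓ : E → ℕ) (D : VH V E ℓ → ℤ) (v : V) :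
    VH V E ℓ → ℤ := fun w =>
  D w + divH G ℓ (fun w' => if inCutAt G ℓ D v w' then 1 else 0) w

/-!
Along a subdivided edge of length `L`, a function on `H` is determined by its values at the
two ends and by its discrete Laplacian on the interior. Two admissible divisors differ there by
at most two opposite chips, and the weight `∑ (L - k) c k ∈ [0, L)` of a single chip locates
it; comparing weights shows that a canonical extension is unique. Firing the cut `C_v(D)` moves
the chip of each edge at `v` one step away from `v` (creating one next to `v` if there was
none), so `χ_{C_v(D)}` is a canonical extension of `χ_v`, whence
`M_v(D) = D + div(χ_{C_v(D)}) = D + div_ℓ(χ_v; D)`.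
-/

/-- With truncated subtraction, `seqLaplacian F 0 = F 1 - F 0` is the initial slope. -/
def seqLaplacian (F : ℕ → ℤ) (n : ℕ) : ℤ := F (n + 1) + F (n - 1) - 2 * F n

/-- On the interior `1 ≤ n < L` of an edge, `c` is a single chip at `p`, or no chip at all when
`p` lies outside the interior. -/
def IsAdmissibleSeq (L : ℕ) (c : ℕ → ℤ) : Prop :=
  ∃ p : ℕ, ∀ n, 1 ≤ n → n < L → c n = if n = p then 1 else 0

lemma sub_eq_sum_seqLaplacian (F : ℕ → ℤ) (i : ℕ) :
    F (i + 1) - F i = ∑ k ∈ range (i + 1), seqLaplacian F k := by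
  induction i with
  | zero => simp [seqLaplacian]; ring
  | succ i ih =>
    rw [sum_range_succ, ← ih]
    simp only [seqLaplacian, Nat.add_sub_cancel]
    ring

lemma eq_add_sum_seqLaplacian (F : ℕ → ℤ) (i : ℕ) :
    F i = F 0 + ∑ k ∈ range i, ((i : ℤ) - k) * seqLaplacian F k := by
  induction i with
  | zero => simp
  | succ i ih =>
    have hsum : ∑ k ∈ range i, (((i + 1 : ℕ) : ℤ) - k) * seqLaplacian F k =
        ∑ k ∈ range i, ((i : ℤ) - k) * seqLaplacian F k + ∑ k ∈ range i, seqLaplacian F k := by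
      rw [← sum_add_distrib]
      exact sum_congr rfl fun k _ => by push_cast; ring
    have hstep := sub_eq_sum_seqLaplacian F i
    rw [sum_range_succ] at hstep
    rw [sum_range_succ, hsum]
    push_cast
    linarith

lemma sum_Ico_sub_mul_single {L p : ℕ} {c : ℕ → ℤ}
    (hc : ∀ n, 1 ≤ n → n < L → c n = if n = p then 1 else 0) :
    ∑ k ∈ Ico 1 L, ((L : ℤ) - k) * c k = if 1 ≤ p ∧ p < L then (L : ℤ) - p else 0 := by
  rw [sum_congr rfl fun k hk => by
    rw [hc k (mem_Ico.1 hk).1 (mem_Ico.1 hk).2, mul_ite, mul_one, mul_zero]]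
  rw [sum_ite_eq']
  simp only [mem_Ico]

/-- Evaluating `F i = F 0 + ∑ (i - k) ΔF k` at `i = L` writes `L` times the initial slope of
`F₁ - F₂` as a difference of two chip weights in `[0, L)`; so the slope vanishes and the two
chips coincide. -/
lemma eq_of_isAdmissibleSeq_add_seqLaplacian {L : ℕ} (hL : 0 < L) {d F₁ F₂ : ℕ → ℤ}
    (h0 : F₁ 0 = F₂ 0) (hL' : F₁ L = F₂ L)
    (h₁ : IsAdmissibleSeq L (d + seqLaplacian F₁))
    (h₂ : IsAdmissibleSeq L (d + seqLaplacian F₂)) :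
    ∀ i ≤ L, F₁ i = F₂ i := by
  obtain ⟨p, hp⟩ := h₁
  obtain ⟨q, hq⟩ := h₂
  set g : ℕ → ℤ := F₁ - F₂
  have hg0 : g 0 = 0 := sub_eq_zero.2 h0
  have hgL : g L = 0 := sub_eq_zero.2 hL'
  have hlap : ∀ n, 1 ≤ n → n < L →
      seqLaplacian g n = (if n = p then 1 else 0) - (if n = q then 1 else 0) := by
    intro n h1 h2
    rw [← hp n h1 h2, ← hq n h1 h2]
    simp only [g, seqLaplacian, Pi.add_apply, Pi.sub_apply]
    ring
  have hweight : (L : ℤ) * g 1 = (if 1 ≤ q ∧ q < L then (L : ℤ) - q else 0) -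
      (if 1 ≤ p ∧ p < L then (L : ℤ) - p else 0) := by
    have h := eq_add_sum_seqLaplacian g L
    rw [hg0, hgL, range_eq_Ico, sum_eq_sum_Ico_succ_bot hL,
      sum_congr rfl fun k hk => by
        rw [hlap k (mem_Ico.1 hk).1 (mem_Ico.1 hk).2, mul_sub],
      sum_sub_distrib, sum_Ico_sub_mul_single (fun n _ _ => rfl),
      sum_Ico_sub_mul_single (fun n _ _ => rfl)] at h
    simp only [seqLaplacian, hg0] at h
    push_cast at h
    linarith
  have hslope : g 1 = 0 := by
    have : -(L : ℤ) < L * g 1 ∧ (L : ℤ) * g 1 < L := by rw [hweight]; split_ifs <;> omega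
    rcases lt_trichotomy (g 1) 0 with h | h | h
    · nlinarith
    · exact h
    · nlinarith
  have hlap0 : ∀ k < L, seqLaplacian g k = 0 := by
    intro k hk
    rcases Nat.eq_zero_or_pos k with rfl | hk0
    · simpa [seqLaplacian, hg0] using hslope
    · rw [hlap k hk0 hk]
      rw [hslope, mul_zero] at hweight
      split_ifs at hweight ⊢ <;> omega
  intro i hi
  have h := eq_add_sum_seqLaplacian g i
  rw [hg0, sum_eq_zero fun k hk => by rw [hlap0 k (by simp at hk; omega), mul_zero]] at h
  exact sub_eq_zero.1 (show g i = 0 by simpa using h)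

lemma zero_or_single_iff {N : ℕ} (c : Fin N → ℤ) :
    ((∀ j, c j = 0) ∨ ∃ j, c j = 1 ∧ ∀ j' ≠ j, c j' = 0) ↔
      ∃ p : ℕ, ∀ j : Fin N, c j = if j.val + 1 = p then 1 else 0 := by
  constructor
  · rintro (hzero | ⟨j, hj, hother⟩)
    · exact ⟨0, fun j => by simp [hzero j]⟩
    · refine ⟨j.val + 1, fun j' => ?_⟩
      by_cases h : j' = j
      · simp [h, hj]
      · simp [hother j' h, Fin.val_ne_of_ne h]
  · rintro ⟨p, hp⟩
    by_cases h : ∃ j : Fin N, j.val + 1 = p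
    · obtain ⟨j, rfl⟩ := h
      refine Or.inr ⟨j, by simp [hp], fun j' hj' => ?_⟩
      simp [hp, Fin.val_ne_of_ne hj']
    · simp only [not_exists] at h
      exact Or.inl fun j => by simp [hp, h j]

section Subdivision

variable {V E : Type} (G : Multigraph V E) (ℓ : E → ℕ)

lemma xv_zero (e : E) : xv G ℓ e 0 = Sum.inl (G.tail e) := by
  simp [xv]

lemma xv_length {e : E} (he : 0 < ℓ e) : xv G ℓ e (ℓ e) = Sum.inl (G.head e) := by
  simp [xv, he.ne']

lemma xv_eq_inr_iff (e e' : E) (j : Fin (ℓ e' - 1)) (n : ℕ) :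
    xv G ℓ e n = Sum.inr ⟨e', j⟩ ↔ e = e' ∧ n = j.val + 1 := by
  unfold xv
  split_ifs with h0 hlt
  · simp only [false_iff]
    omega
  · simp only [Sum.inr.injEq, Sigma.mk.injEq]
    constructor
    · rintro ⟨rfl, hj⟩
      have := congrArg Fin.val (eq_of_heq hj)
      exact ⟨rfl, by simp only at this; omega⟩
    · rintro ⟨rfl, rfl⟩
      exact ⟨rfl, heq_of_eq (Fin.ext (by simp))⟩
  · simp only [false_iff]
    rintro ⟨rfl, rfl⟩
    have := j.isLt
    omega

lemma xv_succ (e : E) (j : Fin (ℓ e - 1)) : xv G ℓ e (j.val + 1) = Sum.inr ⟨e, j⟩ :=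
  (xv_eq_inr_iff G ℓ e e j _).2 ⟨rfl, rfl⟩

lemma xv_of_pos_of_lt {e : E} {n : ℕ} (h1 : 1 ≤ n) (h2 : n < ℓ e) :
    xv G ℓ e n = Sum.inr ⟨e, ⟨n - 1, by omega⟩⟩ := by
  obtain ⟨m, rfl⟩ : ∃ m, n = m + 1 := ⟨n - 1, by omega⟩
  exact xv_succ G ℓ e ⟨m, by omega⟩

lemma forall_fin_iff_forall_xv (e : E) (P : VH V E ℓ → ℕ → Prop) :
    (∀ j : Fin (ℓ e - 1), P (Sum.inr ⟨e, j⟩) (j.val + 1)) ↔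
      ∀ n, 1 ≤ n → n < ℓ e → P (xv G ℓ e n) n := by
  constructor
  · intro h n h1 h2
    obtain ⟨m, rfl⟩ : ∃ m, n = m + 1 := ⟨n - 1, by omega⟩
    simpa [xv_succ G ℓ e ⟨m, by omega⟩] using h ⟨m, by omega⟩
  · intro h j
    have := j.isLt
    simpa [xv_succ] using h (j.val + 1) (by omega) (by omega)

lemma gAdm_iff (D : VH V E ℓ → ℤ) :
    GAdm G ℓ D ↔ ∀ e, IsAdmissibleSeq (ℓ e) (fun n => D (xv G ℓ e n)) := by
  refine forall_congr' fun e => ?_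
  rw [zero_or_single_iff (fun j => D (Sum.inr ⟨e, j⟩))]
  exact exists_congr fun p =>
    forall_fin_iff_forall_xv G ℓ e (fun w n => D w = if n = p then 1 else 0)

lemma exists_chip_iff {D : VH V E ℓ → ℤ} {e : E} {p : ℕ}
    (hp : ∀ n, 1 ≤ n → n < ℓ e → D (xv G ℓ e n) = if n = p then 1 else 0) (R : ℕ → Prop) :
    (∃ j : Fin (ℓ e - 1), D (Sum.inr ⟨e, j⟩) = 1 ∧ R j.val) ↔
      1 ≤ p ∧ p < ℓ e ∧ R (p - 1) := by
  constructor
  · rintro ⟨j, hj, hR⟩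
    have := j.isLt
    rw [← xv_succ G ℓ, hp _ (by omega) (by omega)] at hj
    split_ifs at hj with h
    · exact ⟨by omega, by omega, by simpa [← h] using hR⟩
    · exact absurd hj zero_ne_one
  · rintro ⟨h1, h2, hR⟩
    refine ⟨⟨p - 1, by omega⟩, ?_, hR⟩
    rw [← xv_of_pos_of_lt G ℓ h1 h2, hp p h1 h2, if_pos rfl]

lemma inCutAt_xv {e : E} (hℓ : 0 < ℓ e) {D : VH V E ℓ → ℤ} {p : ℕ}
    (hp : ∀ n, 1 ≤ n → n < ℓ e → D (xv G ℓ e n) = if n = p then 1 else 0)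
    (v : V) {m : ℕ} (hm : m ≤ ℓ e) :
    inCutAt G ℓ D v (xv G ℓ e m) ↔
      (G.tail e = v ∧ (m = 0 ∨ m < ℓ e ∧ 1 ≤ p ∧ p < ℓ e ∧ m ≤ p)) ∨
      (G.head e = v ∧ (m = ℓ e ∨ 1 ≤ m ∧ 1 ≤ p ∧ p < ℓ e ∧ p ≤ m)) := by
  rcases Nat.eq_zero_or_pos m with rfl | hm0
  · simp [xv_zero, inCutAt, hℓ.ne]
  rcases hm.lt_or_eq with hmℓ | rfl
  · obtain ⟨k, rfl⟩ : ∃ k, m = k + 1 := ⟨m - 1, by omega⟩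
    rw [xv_succ G ℓ e ⟨k, by omega⟩]
    simp only [inCutAt, Fin.le_def]
    rw [exists_chip_iff G ℓ hp (k ≤ ·), exists_chip_iff G ℓ hp (· ≤ k)]
    grind
  · simp [xv_length G ℓ hℓ, inCutAt]
    grind

variable [Fintype E] [DecidableEq V] [DecidableEq E]

lemma divH_inr (F : VH V E ℓ → ℤ) (e : E) (j : Fin (ℓ e - 1)) :
    divH G ℓ F (Sum.inr ⟨e, j⟩) =
      F (xv G ℓ e (j.val + 2)) + F (xv G ℓ e j.val) - 2 * F (xv G ℓ e (j.val + 1)) := by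
  have hj : j.val + 1 < ℓ e := by have := j.isLt; omega
  unfold divH
  rw [sum_eq_single_of_mem e (mem_univ e) fun e' _ he' => sum_eq_zero fun n _ => by
    simp [xv_eq_inr_iff, he'], sum_add_distrib, sum_eq_single (j.val + 1), sum_eq_single j.val]
  · simp only [xv_eq_inr_iff, true_and, if_true]
    ring
  · intro n _ hn
    simp [xv_eq_inr_iff, hn]
  · simp; omega
  · intro n _ hn
    simp [xv_eq_inr_iff, hn]
  · simp; omega

lemma divH_xv (F : VH V E ℓ → ℤ) {e : E} {n : ℕ} (h1 : 1 ≤ n) (h2 : n < ℓ e) :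
    divH G ℓ F (xv G ℓ e n) = seqLaplacian (fun m => F (xv G ℓ e m)) n := by
  obtain ⟨m, rfl⟩ : ∃ m, n = m + 1 := ⟨n - 1, by omega⟩
  rw [xv_succ G ℓ e ⟨m, by omega⟩, divH_inr, seqLaplacian]
  simp only [Nat.add_sub_cancel]

lemma IsCanExt.unique (hℓ : ∀ e, 0 < ℓ e) {D : VH V E ℓ → ℤ} {f : V → ℤ}
    {F₁ F₂ : VH V E ℓ → ℤ} (h₁ : IsCanExt G ℓ D f F₁) (h₂ : IsCanExt G ℓ D f F₂) :
    F₁ = F₂ := by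
  have hseq : ∀ F, IsCanExt G ℓ D f F → ∀ e, IsAdmissibleSeq (ℓ e)
      ((fun n => D (xv G ℓ e n)) + seqLaplacian (fun n => F (xv G ℓ e n))) := by
    intro F hF e
    obtain ⟨p, hp⟩ := (gAdm_iff G ℓ _).1 hF.2 e
    exact ⟨p, fun n h1 h2 => by simpa [divH_xv G ℓ F h1 h2] using hp n h1 h2⟩
  have hedge : ∀ e, ∀ n ≤ ℓ e, F₁ (xv G ℓ e n) = F₂ (xv G ℓ e n) := fun e =>
    eq_of_isAdmissibleSeq_add_seqLaplacian (hℓ e)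
      (by simp only [xv_zero, h₁.1, h₂.1]) (by simp only [xv_length G ℓ (hℓ e), h₁.1, h₂.1])
      (hseq F₁ h₁ e) (hseq F₂ h₂ e)
  funext w
  rcases w with u | ⟨e, j⟩
  · rw [h₁.1, h₂.1]
  · simpa [xv_succ] using hedge e (j.val + 1) (by omega)

lemma isCanExt_cut (hℓ : ∀ e, 0 < ℓ e) {D : VH V E ℓ → ℤ} (hD : GAdm G ℓ D) (v : V) :
    IsCanExt G ℓ D (fun u => if u = v then 1 else 0)
      (fun w => if inCutAt G ℓ D v w then 1 else 0) := by
  -- the two sides differ only in their `Decidable` instances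
  refine ⟨fun u => by simp only [inCutAt]; congr, (gAdm_iff G ℓ _).2 fun e => ?_⟩
  obtain ⟨p, hp⟩ := (gAdm_iff G ℓ D).1 hD e
  have hcut := fun m (hm : m ≤ ℓ e) => inCutAt_xv G ℓ (hℓ e) hp v hm
  -- the chip moves one step away from `v`; a missing one appears next to `v`
  refine ⟨if G.tail e = v then (if 1 ≤ p ∧ p < ℓ e then p + 1 else 1)
    else if G.head e = v then (if 1 ≤ p ∧ p < ℓ e then p - 1 else ℓ e - 1) else p,
    fun n h1 h2 => ?_⟩
  simp only [divH_xv G ℓ _ h1 h2, seqLaplacian, hp n h1 h2,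
    hcut n (by omega), hcut (n + 1) (by omega), hcut (n - 1) (by omega)]
  by_cases ht : G.tail e = v <;> by_cases hh : G.head e = v
  · exact absurd (ht.trans hh.symm) (G.loopless e)
  all_goals grind

end Subdivision

/-- `div_ℓ(f; D)` of the paper is `divH G ℓ (canExt D f)`. -/
theorem stmt4_general (G : Multigraph V E) (ℓ : E → ℕ) (hℓ : ∀ e, 0 < ℓ e)
    (canExt : (VH V E ℓ → ℤ) → (V → ℤ) → (VH V E ℓ → ℤ))
    (hcan : ∀ (D : VH V E ℓ → ℤ) (f : V → ℤ), IsCanExt G ℓ D f (canExt D f))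
    (D : VH V E ℓ → ℤ) (hD : GAdm G ℓ D) (v : V) :
    GAdm G ℓ (Mv G ℓ D v) ∧
    ∀ w, Mv G ℓ D v w =
      D w + divH G ℓ (canExt D (fun u => if u = v then 1 else 0)) w := by
  have hcut := isCanExt_cut G ℓ hℓ hD v
  refine ⟨hcut.2, fun w => ?_⟩
  rw [← IsCanExt.unique G ℓ hℓ hcut (hcan D _)]
  rfl

/-- let `canExt D f` denote the canonical extension of `f` with respect
to `D`, so that `div_ℓ(f; D) = div(canExt D f)`. For every `G`-admissible divisor `D`
on `H` and every vertex `v` of `G`, the divisor `M_v(D)` is `G`-admissible and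
`M_v(D) = D + div_ℓ(χ_v; D)`. -/
theorem stmt4 (G : Multigraph V E) (hG : G.Conn) (ℓ : E → ℕ) (hℓ : ∀ e, 0 < ℓ e)
    (canExt : (VH V E ℓ → ℤ) → (V → ℤ) → (VH V E ℓ → ℤ))
    (hcan : ∀ (D : VH V E ℓ → ℤ) (f : V → ℤ), IsCanExt G ℓ D f (canExt D f))
    (D : VH V E ℓ → ℤ) (hD : GAdm G ℓ D) (v : V) :
    GAdm G ℓ (Mv G ℓ D v) ∧
    ∀ w, Mv G ℓ D v w =
      D w + divH G ℓ (canExt D (fun u => if u = v then 1 else 0)) w :=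
  stmt4_general G ℓ hℓ canExt hcan D hD v
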